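/- arXiv:1709.05464 — 5 statements merged into one kernel-verified Lean document; each statement's English description precedes it below -/
import Mathlib

section
/- Let A be a finite commutative Frobenius ring and C ⊆ A^l an A-submodule. Then (C^⊥)^⊥ = C. -/
universe u


/-- In a finite monoid, some positive power of any element is idempotent. -/
theorem exists_pow_idem {A : Type u} [CommMonoid A] [Finite A] (r : A) :
    ∃ N : ℕ, 0 < N ∧ r ^ N * r ^ N = r ^ N := by
  obtain ⟨a, b, hab, h⟩ := Finite.exists_ne_map_eq_of_infinite (fun n : ℕ => r ^ n)
  wlog hlt : a < b generalizing a b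
  · exact this b a hab.symm h.symm (by omega)
  set d := b - a with hd
  have hd1 : 0 < d := by omega
  have key : ∀ k m : ℕ, a ≤ m → r ^ (m + k * d) = r ^ m := by
    intro k
    induction k with
    | zero => simp
    | succ k ih =>
      intro m hm
      have h1 : r ^ (m + d) = r ^ m := by
        have : m + d = (m - a) + b := by omega
        rw [this, pow_add, ← h, ← pow_add]
        congr 1
        omega
      calc r ^ (m + (k+1) * d) = r ^ (m + d + k * d) := by ring_nf
        _ = r ^ (m + d) := ih (m + d) (by omega)
        _ = r ^ m := h1
  refine ⟨(a + 1) * d, by positivity, ?_⟩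
  rw [← pow_add]
  have : (a + 1) * d + (a + 1) * d = (a + 1) * d + ((a+1)) * d := rfl
  have := key (a + 1) ((a + 1) * d) (by nlinarith)
  rw [← this]

/-- Every maximal ideal of a finite nontrivial commutative ring has a nonzero
annihilator element. -/
theorem ann_aux : ∀ (n : ℕ) (A : Type u) [CommRing A] [Fintype A] [Nontrivial A],
    Fintype.card A ≤ n → ∀ (m : Ideal A), m.IsMaximal →
    ∃ a : A, a ≠ 0 ∧ ∀ x ∈ m, x * a = 0 := by
  intro n
  induction n with
  | zero => intro A _ _ _ hc; exact absurd hc (by simp [Fintype.card_pos.ne'])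
  | succ n ih =>
    intro A _ _ _ hcard m hm
    classical
    -- powers of m stabilize
    have hfin : Finite (Ideal A) :=
      Finite.of_injective (fun I : Ideal A => (I : Set A)) SetLike.coe_injective
    obtain ⟨a, b, hab, h⟩ := Finite.exists_ne_map_eq_of_infinite (fun k : ℕ => m ^ k)
    wlog hlt : a < b generalizing a b
    · exact this b a hab.symm h.symm (by omega)
    have hstab : m ^ a = m ^ (a + 1) := by
      refine le_antisymm ?_ (Ideal.pow_le_pow_right (by omega))
      calc m ^ a = m ^ b := h
        _ ≤ m ^ (a + 1) := Ideal.pow_le_pow_right (by omega)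
    set J : Ideal A := m ^ a with hJ
    by_cases hJbot : J = ⊥
    · -- m is nilpotent; pick the last nonzero power
      have hex : ∃ k, m ^ k = ⊥ := ⟨a, hJbot⟩
      set k0 := Nat.find hex with hk0
      have hk0bot : m ^ k0 = ⊥ := Nat.find_spec hex
      have hk0pos : 0 < k0 := by
        rcases Nat.eq_zero_or_pos k0 with h0 | h0
        · exfalso
          rw [h0, pow_zero, Ideal.one_eq_top] at hk0bot
          exact absurd (hk0bot ▸ Submodule.mem_top (x := (1:A))) (by simp)
        · exact h0
      have hne : m ^ (k0 - 1) ≠ ⊥ := Nat.find_min hex (by omega)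
      obtain ⟨c, hcmem, hcne⟩ := Submodule.exists_mem_ne_zero_of_ne_bot hne
      refine ⟨c, hcne, fun x hx => ?_⟩
      have : x * c ∈ m * m ^ (k0 - 1) := Ideal.mul_mem_mul hx hcmem
      have heq : m * m ^ (k0 - 1) = m ^ k0 := by
        rw [← pow_succ']
        congr 1
        omega
      rw [heq, hk0bot] at this
      simpa using this
    · -- Nakayama gives r ≡ 1 mod m with r J = 0
      have hfg : J.FG := Submodule.fg_def.mpr ⟨(J : Set A), Set.toFinite _, Submodule.span_eq J⟩
      have hIN : J ≤ m • J := by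
        rw [Ideal.smul_eq_mul, ← pow_succ']
        exact le_of_eq hstab
      obtain ⟨r, hr1, hrJ⟩ :=
        Submodule.exists_sub_one_mem_and_smul_eq_zero_of_fg_of_le_smul m J hfg hIN
      have hrm : r ∉ m := by
        intro hrm
        exact hm.ne_top (Ideal.eq_top_of_isUnit_mem m
          (show (1:A) ∈ m from by simpa using m.sub_mem hrm hr1) isUnit_one)
      obtain ⟨N, hN, hNidem⟩ := exists_pow_idem r
      set e := r ^ N with he
      have heJ : ∀ x ∈ J, e * x = 0 := by
        intro x hx
        have : r ^ N * x = r ^ (N - 1) * (r * x) := by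
          rw [← mul_assoc, ← pow_succ]
          congr 2
          omega
        rw [he, this, show r * x = r • x from rfl, hrJ x hx, mul_zero]
      have hem : e ∉ m := fun hem => hrm (hm.isPrime.mem_of_pow_mem N hem)
      have hene : e ≠ 1 := by
        intro h1
        obtain ⟨c, hcmem, hcne⟩ := Submodule.exists_mem_ne_zero_of_ne_bot hJbot
        exact hcne (by simpa [h1] using heJ c hcmem)
      set f := 1 - e with hf
      have hfne : f ≠ 0 := fun h0 => hene (by rw [hf] at h0; linear_combination -h0)
      have hef : e * f = 0 := by rw [hf, mul_sub, mul_one, hNidem, sub_self]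
      have hfm : f ∈ m := by
        rcases (hm.isPrime.mem_or_mem (hef ▸ m.zero_mem)) with h | h
        · exact absurd h hem
        · exact h
      set K : Ideal A := Ideal.span {f} with hK
      have hKm : K ≤ m := by rw [hK, Ideal.span_le]; simpa using hfm
      have hKtop : K ≠ ⊤ := fun h => hm.ne_top (top_le_iff.mp (h ▸ hKm))
      -- the quotient ring
      have : Nontrivial (A ⧸ K) := Ideal.Quotient.nontrivial_iff.mpr hKtop
      have hBfin : Finite (A ⧸ K) := Finite.of_surjective _ Ideal.Quotient.mk_surjective
      have : Fintype (A ⧸ K) := Fintype.ofFinite _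
      have hcardlt : Fintype.card (A ⧸ K) < Fintype.card A := by
        refine Fintype.card_lt_of_surjective_not_injective _ Ideal.Quotient.mk_surjective ?_
        intro hinj
        apply hfne
        apply hinj
        rw [map_zero, Ideal.Quotient.eq_zero_iff_mem]
        exact Ideal.subset_span (by simp)
      have hmmax : (m.map (Ideal.Quotient.mk K)).IsMaximal := by
        rcases Ideal.map_eq_top_or_isMaximal_of_surjective (Ideal.Quotient.mk K) Ideal.Quotient.mk_surjective hm
          with htop | hmax
        · exfalso
          have := congrArg (Ideal.comap (Ideal.Quotient.mk K)) htop
          rw [Ideal.comap_map_of_surjective _ Ideal.Quotient.mk_surjective, Ideal.comap_top,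
            ← RingHom.ker_eq_comap_bot, Ideal.mk_ker] at this
          rw [sup_eq_left.mpr hKm] at this
          exact hm.ne_top this
        · exact hmax
      obtain ⟨b', hb'ne, hb'⟩ := ih (A ⧸ K) (by omega) _ hmmax
      obtain ⟨c, hc⟩ := Ideal.Quotient.mk_surjective b'
      refine ⟨e * c, ?_, ?_⟩
      · intro h0
        apply hb'ne
        have hpe : Ideal.Quotient.mk K e = 1 := by
          have hf0 : Ideal.Quotient.mk K f = 0 := by
            rw [Ideal.Quotient.eq_zero_iff_mem]; exact Ideal.subset_span (by simp)
          have h2 : Ideal.Quotient.mk K e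
              = Ideal.Quotient.mk K 1 - Ideal.Quotient.mk K f := by
            rw [← map_sub]; congr 1; rw [hf]; ring
          rw [h2, hf0, sub_zero, map_one]
        calc b' = Ideal.Quotient.mk K e * Ideal.Quotient.mk K c := by rw [hpe, one_mul, hc]
          _ = Ideal.Quotient.mk K (e * c) := by rw [map_mul]
          _ = 0 := by rw [h0, map_zero]
      · intro x hx
        have hxm : Ideal.Quotient.mk K x ∈ m.map (Ideal.Quotient.mk K) :=
          Ideal.mem_map_of_mem _ hx
        have hmem : x * (e * c) ∈ K := by
          rw [← Ideal.Quotient.eq_zero_iff_mem, map_mul, map_mul, hc]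
          calc Ideal.Quotient.mk K x * (Ideal.Quotient.mk K e * b')
              = Ideal.Quotient.mk K e * (Ideal.Quotient.mk K x * b') := by ring
            _ = 0 := by rw [hb' _ hxm, mul_zero]
        obtain ⟨t, ht⟩ := Ideal.mem_span_singleton'.mp (hK ▸ hmem)
        have hee : e * e = e := hNidem
        calc x * (e * c) = e * (x * (e * c)) := by
              rw [show x * (e * c) = (x * c) * (e) from by ring]
              rw [show e * (x * c * e) = (x * c) * (e * e) from by ring, hee]
          _ = e * (t * f) := by rw [ht]
          _ = t * (e * f) := by ring
          _ = 0 := by rw [hef, mul_zero]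


theorem ann_of_proper {A : Type u} [CommRing A] [Fintype A] [Nontrivial A]
    (I : Ideal A) (hI : I ≠ ⊤) : ∃ a : A, a ≠ 0 ∧ ∀ x ∈ I, x * a = 0 := by
  obtain ⟨m, hm, hIm⟩ := Ideal.exists_le_maximal I hI
  obtain ⟨a, ha, hann⟩ := ann_aux (Fintype.card A) A le_rfl m hm
  exact ⟨a, ha, fun x hx => hann x (hIm hx)⟩

/-- The dual code of `C ⊆ A^l` with respect to the standard bilinear form. -/
def dualCode {A : Type*} [CommRing A] {l : ℕ} (C : Submodule A (Fin l → A)) :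
    Submodule A (Fin l → A) where
  carrier := {e | ∀ c ∈ C, ∑ i, e i * c i = 0}
  zero_mem' := by intro c hc; simp
  add_mem' := by
    intro a b ha hb c hc
    have h1 := ha c hc
    have h2 := hb c hc
    simp only [Pi.add_apply, add_mul, Finset.sum_add_distrib, h1, h2, add_zero]
  smul_mem' := by
    intro r e he c hc
    have h := he c hc
    simp only [Pi.smul_apply, smul_eq_mul, mul_assoc, ← Finset.mul_sum, h, mul_zero]


/-- Over a finite self-injective commutative ring, `A` is a cogenerator: every nonzero
element of a module admits a functional not vanishing on it. -/
theorem exists_functional {A : Type u} [CommRing A] [Fintype A] [Nontrivial A]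
    [Module.Injective A A] {M : Type u} [AddCommGroup M] [Module A M]
    (m₀ : M) (hm₀ : m₀ ≠ 0) : ∃ φ : M →ₗ[A] A, φ m₀ ≠ 0 := by
  set f := LinearMap.toSpanSingleton A M m₀ with hf
  have hItop : LinearMap.ker f ≠ ⊤ := by
    intro h
    apply hm₀
    have : (1 : A) ∈ LinearMap.ker f := h ▸ Submodule.mem_top
    simpa [hf] using this
  obtain ⟨a, ha, hann⟩ := ann_of_proper (LinearMap.ker f) hItop
  set g₀ := LinearMap.toSpanSingleton A A a with hg₀
  have hle : LinearMap.ker f ≤ LinearMap.ker g₀ := by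
    intro x hx
    simp only [LinearMap.mem_ker, hg₀, LinearMap.toSpanSingleton_apply, smul_eq_mul]
    exact hann x hx
  set lift := (LinearMap.ker f).liftQ g₀ hle with hlift
  set eqv := f.quotKerEquivRange with heqv
  set h : (LinearMap.range f) →ₗ[A] A := lift.comp (eqv.symm : _ →ₗ[A] _) with hh
  obtain ⟨φ, hφ⟩ := Module.Injective.out (LinearMap.range f).subtype
    (Submodule.injective_subtype _) h
  have hmem : m₀ ∈ LinearMap.range f := ⟨1, by simp [hf]⟩
  refine ⟨φ, ?_⟩
  have h1 : φ m₀ = h ⟨m₀, hmem⟩ := hφ ⟨m₀, hmem⟩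
  have h2 : eqv.symm ⟨m₀, hmem⟩ = Submodule.Quotient.mk 1 := by
    apply eqv.injective
    rw [LinearEquiv.apply_symm_apply]
    ext
    rw [heqv, LinearMap.quotKerEquivRange_apply_mk]
    simp [hf]
  rw [h1, hh, LinearMap.comp_apply, LinearEquiv.coe_coe, h2, hlift, Submodule.liftQ_apply]
  simpa [hg₀] using ha


/-- For a finite commutative Frobenius ring `A` and an `A`-submodule `C ⊆ A^l`,
`(C^⊥)^⊥ = C`. -/
theorem stmt10 {A : Type*} [CommRing A] [Fintype A] [Module.Injective A A] (l : ℕ)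
    (C : Submodule A (Fin l → A)) :
    dualCode (dualCode C) = C := by
  rcases subsingleton_or_nontrivial A with hs | hn
  · ext x
    have : x = 0 := Subsingleton.elim x 0
    simp [this]
  · apply le_antisymm
    · intro e he
      by_contra heC
      have hm₀ : (C.mkQ e : (Fin l → A) ⧸ C) ≠ 0 := by
        rwa [Submodule.mkQ_apply, ne_eq, Submodule.Quotient.mk_eq_zero]
      obtain ⟨φ, hφ⟩ := exists_functional (A := A) (M := (Fin l → A) ⧸ C) (C.mkQ e) hm₀
      set ψ := φ.comp C.mkQ with hψdef
      have hψC : ∀ c ∈ C, ψ c = 0 := by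
        intro c hc
        have : C.mkQ c = 0 := by
          rw [Submodule.mkQ_apply, Submodule.Quotient.mk_eq_zero]; exact hc
        simp [hψdef, this]
      have hψ : ∀ v : Fin l → A, ψ v = ∑ i, v i * ψ (fun j => if i = j then 1 else 0) := by
        intro v
        conv_lhs => rw [pi_eq_sum_univ v]
        rw [map_sum]
        refine Finset.sum_congr rfl fun i _ => ?_
        rw [map_smul, smul_eq_mul]
      set d : Fin l → A := fun i => ψ (fun j => if i = j then 1 else 0) with hd_def
      have hd : d ∈ dualCode C := by
        intro c hc
        have h0 := hψ c
        rw [hψC c hc] at h0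
        rw [show ∑ i, d i * c i = ∑ i, c i * d i from
          Finset.sum_congr rfl fun i _ => mul_comm _ _]
        exact h0.symm
      have hzero : ∑ i, e i * d i = 0 := he d hd
      apply hφ
      have : ψ e = φ (C.mkQ e) := rfl
      rw [← this, hψ e]
      exact hzero
    · intro c hc d hd
      rw [show ∑ i, c i * d i = ∑ i, d i * c i from
        Finset.sum_congr rfl fun i _ => mul_comm _ _]
      exact hd c hc
end

section
/- Let A = R[X_1,…,X_r]/⟨X_1^{n_1}−1,…,X_r^{n_r}−1⟩ over a finite commutative chain ring R, let Φ : A^l → R^{nl} be the coordinate map (listing coefficients of each component in a fixed monomial order, n = n_1⋯n_r), and let C ⊆ A^l be an A-submodule. Then Φ(C)^{⊥_E} = Φ(C^{⊥_H}), where ⊥_E is the dual with respect to the Euclidean inner product on R^{nl} and ⊥_H is the dual of C with respect to the Hermitian product ⟨f, g⟩ = Σ_j f_j·ḡ_j, with ḡ the conjugate of g obtained by replacing each X_j by X_j^{−1}. -/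
/-!
The monomial basis `b` of `A` is indexed by the finite abelian group `G = ∏ j, ℤ/n_j`, with
`b p * b q = b (p + q)` and `σ (b p) = b (-p)`. Hence the constant coefficient of `Σ_k e_k σ(c_k)`
is the Euclidean product `Φ(e) · Φ(c)`, and its coefficient at `a` is `Φ(e) · Φ(b a • c)`.
Since `C` is closed under multiplication by each `b a`, a vector Euclidean-orthogonal to `Φ(C)`
is `Φ` of an element all of whose Hermitian products with `C` vanish, and conversely.
-/

open Module

namespace Module.Basis

variable {R A G : Type*} [CommSemiring R] [CommSemiring A] [Algebra R A]
  [AddCommGroup G] {b : Basis G R A}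

theorem repr_basis_mul_apply (hb : ∀ p q, b p * b q = b (p + q)) (a : G) (x : A) (q : G) :
    b.repr (b a * x) q = b.repr x (-a + q) := by
  have : (b.coord q).comp (LinearMap.mulLeft R (b a)) = b.coord (-a + q) := by
    refine b.ext fun p => ?_
    classical
    simp only [LinearMap.comp_apply, LinearMap.mulLeft_apply, hb, coord_apply, repr_self,
      Finsupp.single_apply, eq_neg_add_iff_add_eq]
  exact LinearMap.congr_fun this x

variable [Fintype G]

theorem repr_mul_conj_apply_zero {F : Type*} [FunLike F A A] [LinearMapClass F R A A]
    (hb : ∀ p q, b p * b q = b (p + q)) (σ : F) (hσ : ∀ p, σ (b p) = b (-p)) (x y : A) :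
    b.repr (x * σ y) 0 = ∑ q, b.repr x q * b.repr y q := by
  calc b.repr (x * σ y) 0 = b.repr (∑ q, b.repr y q • (b (-q) * x)) 0 := by
        conv_lhs => rw [mul_comm, ← b.sum_repr y]
        simp only [map_sum, map_smul, hσ, Finset.sum_mul, smul_mul_assoc]
    _ = ∑ q, b.repr y q * b.repr x q := by
        simp only [map_sum, map_smul, Finsupp.coe_finsetSum, Finset.sum_apply,
          Finsupp.smul_apply, smul_eq_mul, repr_basis_mul_apply hb, neg_neg, add_zero]
    _ = ∑ q, b.repr x q * b.repr y q := by simp only [mul_comm]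

theorem euclideanDual_coord_eq_image_hermitianDual {ι : Type*} [Fintype ι]
    (hb : ∀ p q, b p * b q = b (p + q)) (σ : A →ₐ[R] A) (hσ : ∀ p, σ (b p) = b (-p))
    (C : Submodule A (ι → A)) :
    {v : ι → G → R | ∀ c ∈ C, ∑ k, ∑ i, v k i * b.repr (c k) i = 0}
      = (fun e : ι → A => fun k i => b.repr (e k) i) ''
        {e : ι → A | ∀ c ∈ C, ∑ k, e k * σ (c k) = 0} := by
  have pairing : ∀ (e c : ι → A),
      b.repr (∑ k, e k * σ (c k)) 0 = ∑ k, ∑ i, b.repr (e k) i * b.repr (c k) i := by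
    intro e c
    simp only [map_sum, Finsupp.coe_finsetSum, Finset.sum_apply,
      repr_mul_conj_apply_zero hb σ hσ]
  ext v
  constructor
  · intro hv
    let e : ι → A := fun k => b.equivFun.symm (v k)
    have he : ∀ k i, b.repr (e k) i = v k i := fun k i =>
      congrFun (b.equivFun.apply_symm_apply (v k)) i
    refine ⟨e, fun c hc => b.repr.injective (Finsupp.ext fun a => ?_), funext₂ he⟩
    have shifted : σ (b a) * ∑ k, e k * σ (c k) = ∑ k, e k * σ ((b a • c) k) := by
      simp only [Finset.mul_sum, Pi.smul_apply, smul_eq_mul, map_mul]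
      exact Finset.sum_congr rfl fun k _ => by ring
    rw [map_zero, Finsupp.zero_apply]
    calc b.repr (∑ k, e k * σ (c k)) a
        = b.repr (σ (b a) * ∑ k, e k * σ (c k)) 0 := by
          rw [hσ, repr_basis_mul_apply hb, neg_neg, add_zero]
      _ = 0 := by
          simp only [shifted, pairing, he]
          exact hv _ (C.smul_mem _ hc)
  · rintro ⟨e, he, rfl⟩ c hc
    rw [← pairing, he c hc, LinearEquiv.map_zero, Finsupp.coe_zero, Pi.zero_apply]

end Module.Basis

namespace MvPolynomial

variable {R ι : Type*} [CommRing R] {I : Ideal (MvPolynomial ι R)}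

theorem quotient_mk_X_pow_mod {j : ι} {N : ℕ} (h : X j ^ N - 1 ∈ I) (m : ℕ) :
    Ideal.Quotient.mk I (X j ^ m) = Ideal.Quotient.mk I (X j ^ (m % N)) := by
  have hN : Ideal.Quotient.mk I (X j ^ N) = 1 := by
    rw [← map_one (Ideal.Quotient.mk I)]
    exact Ideal.Quotient.eq.mpr h
  conv_lhs => rw [← Nat.div_add_mod m N, pow_add, pow_mul, map_mul, map_pow, hN, one_pow, one_mul]

theorem quotient_mk_prod_X_pow_mul [Fintype ι] {n : ι → ℕ} (hI : ∀ j, X j ^ n j - 1 ∈ I)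
    (p q : ∀ j, Fin (n j)) :
    Ideal.Quotient.mk I (∏ j, X j ^ (p j : ℕ)) * Ideal.Quotient.mk I (∏ j, X j ^ (q j : ℕ))
      = Ideal.Quotient.mk I (∏ j, X j ^ ((p + q) j : ℕ)) := by
  simp only [← map_mul, ← Finset.prod_mul_distrib, map_prod, ← pow_add, Pi.add_apply, Fin.val_add]
  exact Finset.prod_congr rfl fun j _ => quotient_mk_X_pow_mod (hI j) _

end MvPolynomial

theorem stmt12_general {R : Type*} [CommRing R] (r l : ℕ) (n : Fin r → ℕ)
    (hn : ∀ j, 0 < n j)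
    (I : Ideal (MvPolynomial (Fin r) R))
    (hI : I = Ideal.span (Set.range fun j : Fin r =>
      (MvPolynomial.X j : MvPolynomial (Fin r) R) ^ (n j) - 1))
    (b : Module.Basis ((j : Fin r) → Fin (n j)) R (MvPolynomial (Fin r) R ⧸ I))
    (hb : ∀ i : (j : Fin r) → Fin (n j),
      b i = Ideal.Quotient.mk I (∏ j, MvPolynomial.X j ^ ((i j : ℕ))))
    (σ : (MvPolynomial (Fin r) R ⧸ I) ≃ₐ[R] (MvPolynomial (Fin r) R ⧸ I))
    (hσ : ∀ i : (j : Fin r) → Fin (n j),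
      σ (b i) = Ideal.Quotient.mk I (∏ j, MvPolynomial.X j ^ ((n j - (i j : ℕ)) % n j)))
    (C : Submodule (MvPolynomial (Fin r) R ⧸ I) (Fin l → (MvPolynomial (Fin r) R ⧸ I))) :
    {v : Fin l → ((j : Fin r) → Fin (n j)) → R |
        ∀ c ∈ C, ∑ k : Fin l, ∑ i : (j : Fin r) → Fin (n j), v k i * b.repr (c k) i = 0}
      = (fun e : Fin l → (MvPolynomial (Fin r) R ⧸ I) =>
          fun k i => b.repr (e k) i) ''
        {e : Fin l → (MvPolynomial (Fin r) R ⧸ I) | ∀ c ∈ C, ∑ k : Fin l, e k * σ (c k) = 0} := by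
  have : ∀ j, NeZero (n j) := fun j => NeZero.of_pos (hn j)
  have hX : ∀ j, (MvPolynomial.X j : MvPolynomial (Fin r) R) ^ n j - 1 ∈ I := fun j =>
    hI ▸ Ideal.subset_span ⟨j, rfl⟩
  have hb_mul : ∀ p q, b p * b q = b (p + q) := fun p q => by
    simp only [hb, MvPolynomial.quotient_mk_prod_X_pow_mul hX]
  have hσ_neg : ∀ p, σ (b p) = b (-p) := fun p => by
    rw [hσ, hb]
    simp only [Pi.neg_apply, Fin.val_neg']
  exact Basis.euclideanDual_coord_eq_image_hermitianDual hb_mul σ.toAlgHom hσ_neg C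

/-- Let `A = R[X_1,…,X_r]/⟨X_1^{n_1}−1,…,X_r^{n_r}−1⟩`, `b` the monomial basis of `A`
over `R`, `σ` the conjugation automorphism (`X_j ↦ X_j^{-1}`), and `Φ` the coordinate
map `A^l → R^{nl}` sending `e` to the coefficient vectors of its components. For an
`A`-submodule `C ⊆ A^l`, the Euclidean dual of `Φ(C)` equals `Φ(C^{⊥_H})`, where
`⊥_H` is the dual with respect to the Hermitian product `⟨f,g⟩ = Σ_k f_k·σ(g_k)`. -/
theorem stmt12 {R : Type*} [CommRing R] [Fintype R] (r l : ℕ) (n : Fin r → ℕ)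
    (hn : ∀ j, 0 < n j)
    (I : Ideal (MvPolynomial (Fin r) R))
    (hI : I = Ideal.span (Set.range fun j : Fin r =>
      (MvPolynomial.X j : MvPolynomial (Fin r) R) ^ (n j) - 1))
    (b : Module.Basis ((j : Fin r) → Fin (n j)) R (MvPolynomial (Fin r) R ⧸ I))
    (hb : ∀ i : (j : Fin r) → Fin (n j),
      b i = Ideal.Quotient.mk I (∏ j, MvPolynomial.X j ^ ((i j : ℕ))))
    (σ : (MvPolynomial (Fin r) R ⧸ I) ≃ₐ[R] (MvPolynomial (Fin r) R ⧸ I))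
    (hσ : ∀ i : (j : Fin r) → Fin (n j),
      σ (b i) = Ideal.Quotient.mk I (∏ j, MvPolynomial.X j ^ ((n j - (i j : ℕ)) % n j)))
    (C : Submodule (MvPolynomial (Fin r) R ⧸ I) (Fin l → (MvPolynomial (Fin r) R ⧸ I))) :
    {v : Fin l → ((j : Fin r) → Fin (n j)) → R |
        ∀ c ∈ C, ∑ k : Fin l, ∑ i : (j : Fin r) → Fin (n j), v k i * b.repr (c k) i = 0}
      = (fun e : Fin l → (MvPolynomial (Fin r) R ⧸ I) =>
          fun k i => b.repr (e k) i) ''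
        {e : Fin l → (MvPolynomial (Fin r) R ⧸ I) | ∀ c ∈ C, ∑ k : Fin l, e k * σ (c k) = 0} :=
  stmt12_general r l n hn I hI b hb σ hσ C
end

section
/- Let A be a finite commutative Frobenius ring, C ⊆ A^l an A-submodule, C_2 = {c ∈ C : c_1 = 0}, and C' ⊆ A^{l−1} the code obtained by puncturing C_2 at the first coordinate. Then the map φ : C^⊥ → C'^⊥ given by φ(c_1,…,c_l) = (c_2,…,c_l) is a well-defined surjective A-linear map, whose kernel is {(c_1,0,…,0) : c_1·g = 0 for every g ∈ π_1(C)}. -/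
/-!
Splitting `e ⬝ᵥ c = e₀ c₀ + tail e ⬝ᵥ tail c` gives everything except surjectivity. For that,
given `e' ∈ C'^⊥`, the functional `c ↦ e' ⬝ᵥ tail c` on `C` vanishes wherever `c₀ = 0`, so it
factors through the ideal `π₁(C)`. Since `A` is self-injective, Baer's criterion extends it to a
linear map `A → A`, i.e. it is `c ↦ a c₀` for some `a`, and then `(-a, e') ∈ C^⊥`.
-/

theorem LinearMap.exists_mul_eq_of_ker_le_ker {R M : Type*} [CommRing R] [AddCommGroup M]
    [Module R M] [Module.Injective R R] {π ψ : M →ₗ[R] R} (h : ker π ≤ ker ψ) :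
    ∃ a : R, ∀ m, ψ m = a * π m := by
  obtain ⟨g, hg⟩ := Module.Baer.of_injective ‹_› (range π)
    ((ker π).liftQ ψ h ∘ₗ π.quotKerEquivRange.symm.toLinearMap)
  refine ⟨g 1, fun m => ?_⟩
  have := hg (π m) (mem_range_self π m)
  rw [comp_apply, LinearEquiv.coe_coe, quotKerEquivRange_symm_apply_image,
    Submodule.mkQ_apply, Submodule.liftQ_apply] at this
  calc ψ m = g (π m • 1) := by rw [smul_eq_mul, mul_one, this]
    _ = g 1 * π m := by rw [g.map_smul, smul_eq_mul, mul_comm]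

section dualCode

variable {A : Type*} [CommRing A] {l : ℕ}

theorem mem_dualCode_iff {C : Submodule A (Fin l → A)} {e : Fin l → A} :
    e ∈ dualCode C ↔ ∀ c ∈ C, e ⬝ᵥ c = 0 :=
  Iff.rfl

theorem dotProduct_eq_head_add_tail (e c : Fin (l + 1) → A) :
    e ⬝ᵥ c = e 0 * c 0 + Fin.tail e ⬝ᵥ Fin.tail c :=
  Fin.sum_univ_succ _

variable {C : Submodule A (Fin (l + 1) → A)} {C' : Submodule A (Fin l → A)}

theorem tail_mem_dualCode (hC' : ∀ c' ∈ C', Fin.cons 0 c' ∈ C) {e : Fin (l + 1) → A}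
    (he : e ∈ dualCode C) : Fin.tail e ∈ dualCode C' := by
  refine mem_dualCode_iff.2 fun c' hc' => ?_
  simpa [dotProduct_eq_head_add_tail] using mem_dualCode_iff.1 he _ (hC' c' hc')

theorem exists_tail_eq_of_mem_dualCode [Module.Injective A A]
    (hC' : ∀ c ∈ C, c 0 = 0 → Fin.tail c ∈ C') {e' : Fin l → A} (he' : e' ∈ dualCode C') :
    ∃ e ∈ dualCode C, Fin.tail e = e' := by
  let π : C →ₗ[A] A := LinearMap.proj 0 ∘ₗ C.subtype
  let ψ : C →ₗ[A] A := dotProductBilin A A e' ∘ₗ LinearMap.funLeft A A Fin.succ ∘ₗ C.subtype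
  have hker : LinearMap.ker π ≤ LinearMap.ker ψ := fun c hc => he' _ (hC' c c.2 hc)
  obtain ⟨a, ha⟩ := LinearMap.exists_mul_eq_of_ker_le_ker hker
  refine ⟨Fin.cons (-a) e', mem_dualCode_iff.2 fun c hc => ?_, Fin.tail_cons _ _⟩
  have hac : e' ⬝ᵥ Fin.tail c = a * c 0 := ha ⟨c, hc⟩
  rw [dotProduct_eq_head_add_tail, Fin.cons_zero, Fin.tail_cons, hac]
  ring

theorem mem_dualCode_iff_of_tail_eq_zero {e : Fin (l + 1) → A} (he : Fin.tail e = 0) :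
    e ∈ dualCode C ↔ ∀ c ∈ C, e 0 * c 0 = 0 := by
  simp [mem_dualCode_iff, dotProduct_eq_head_add_tail, he]

end dualCode

theorem stmt13_general {A : Type*} [CommRing A] [Module.Injective A A] (l : ℕ)
    (C : Submodule A (Fin (l + 1) → A)) (C' : Submodule A (Fin l → A))
    (hC' : (C' : Set (Fin l → A)) = {c' | Fin.cons 0 c' ∈ C}) :
    (∀ e ∈ dualCode C, (fun j : Fin l => e j.succ) ∈ dualCode C') ∧
    (∀ (a : A) (e f : Fin (l + 1) → A),
      (fun j : Fin l => (a • e + f) j.succ) =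
        a • (fun j : Fin l => e j.succ) + fun j : Fin l => f j.succ) ∧
    (∀ e' ∈ dualCode C', ∃ e ∈ dualCode C, (fun j : Fin l => e j.succ) = e') ∧
    ({e : Fin (l + 1) → A | e ∈ dualCode C ∧ (fun j : Fin l => e j.succ) = 0}
      = {e : Fin (l + 1) → A | (∀ j : Fin l, e j.succ = 0) ∧ ∀ c ∈ C, e 0 * c 0 = 0}) := by
  have hmem (c' : Fin l → A) : c' ∈ C' ↔ Fin.cons 0 c' ∈ C := by
    rw [← SetLike.mem_coe, hC']; rfl
  refine ⟨fun e he => tail_mem_dualCode (fun c' => (hmem c').1) he, fun a e f => rfl,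
    fun e' he' => ?_, ?_⟩
  · have hshort (c) (hc : c ∈ C) (h0 : c 0 = 0) : Fin.tail c ∈ C' := by
      rwa [hmem, ← h0, Fin.cons_self_tail]
    exact exists_tail_eq_of_mem_dualCode hshort he'
  · ext e
    refine ⟨fun ⟨he, h⟩ => ⟨congrFun h, (mem_dualCode_iff_of_tail_eq_zero h).1 he⟩,
      fun ⟨h, he⟩ => ⟨(mem_dualCode_iff_of_tail_eq_zero (funext h)).2 he, funext h⟩⟩

/-- Let `A` be a finite commutative Frobenius ring, `C ⊆ A^{l+1}` an `A`-submodule,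
`C'` the puncturing at the first coordinate of `C_2 = {c ∈ C : c_1 = 0}`. Then the map
`φ : C^⊥ → C'^⊥`, `(c_1,…,c_{l+1}) ↦ (c_2,…,c_{l+1})` is a well-defined surjective
`A`-linear map with kernel `{(c_1,0,…,0) : c_1·g = 0 for every g ∈ π_1(C)}`. -/
theorem stmt13 {A : Type*} [CommRing A] [Fintype A] [Module.Injective A A] (l : ℕ)
    (C : Submodule A (Fin (l + 1) → A)) (C' : Submodule A (Fin l → A))
    (hC' : (C' : Set (Fin l → A)) = {c' | Fin.cons 0 c' ∈ C}) :
    (∀ e ∈ dualCode C, (fun j : Fin l => e j.succ) ∈ dualCode C') ∧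
    (∀ (a : A) (e f : Fin (l + 1) → A),
      (fun j : Fin l => (a • e + f) j.succ) =
        a • (fun j : Fin l => e j.succ) + fun j : Fin l => f j.succ) ∧
    (∀ e' ∈ dualCode C', ∃ e ∈ dualCode C, (fun j : Fin l => e j.succ) = e') ∧
    ({e : Fin (l + 1) → A | e ∈ dualCode C ∧ (fun j : Fin l => e j.succ) = 0}
      = {e : Fin (l + 1) → A | (∀ j : Fin l, e j.succ = 0) ∧ ∀ c ∈ C, e 0 * c 0 = 0}) :=
  stmt13_general l C C' hC'
end

section
/- Let A be a finite commutative Frobenius ring, C ⊆ A^l an A-submodule; then every element c' ∈ C'^⊥ (where C' is the puncturing at the first coordinate of the subcode C_2 = {c ∈ C : c_1 = 0}) extends to an element (c, c') ∈ C^⊥ for some c ∈ A. -/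
/-- Let `A` be a finite commutative Frobenius ring, `C ⊆ A^{l+1}` an `A`-submodule and
`C' = {(c_2,…,c_{l+1}) : (0,c_2,…,c_{l+1}) ∈ C}`. Every `c' ∈ C'^⊥` extends to an
element `(c, c') ∈ C^⊥` for some `c ∈ A`. -/
theorem stmt14 {A : Type*} [CommRing A] [Fintype A] [Module.Injective A A] (l : ℕ)
    (C : Submodule A (Fin (l + 1) → A)) (C' : Submodule A (Fin l → A))
    (hC' : (C' : Set (Fin l → A)) = {c' | Fin.cons 0 c' ∈ C}) :
    ∀ c' ∈ dualCode C', ∃ c : A, Fin.cons c c' ∈ dualCode C := by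
  intro c' hc'
  -- projection onto the first coordinate
  let π : C →ₗ[A] A := (LinearMap.proj 0).comp C.subtype
  -- the linear functional x ↦ -∑ c'_i x_{i+1}
  let f : C →ₗ[A] A :=
    { toFun := fun x => -∑ i, c' i * (x : Fin (l + 1) → A) i.succ
      map_add' := by
        intro x y
        simp [Pi.add_apply, mul_add, Finset.sum_add_distrib]
        ring
      map_smul' := by
        intro r x
        simp [Finset.mul_sum]
        congr 1
        ext i
        ring }
  have hker : LinearMap.ker π ≤ LinearMap.ker f := by
    intro x hx
    have hx0 : (x : Fin (l + 1) → A) 0 = 0 := hx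
    have htail : Fin.tail (x : Fin (l + 1) → A) ∈ C' := by
      have : Fin.tail (x : Fin (l + 1) → A) ∈ (C' : Set (Fin l → A)) ↔
          Fin.cons 0 (Fin.tail (x : Fin (l + 1) → A)) ∈ C := by rw [hC']; rfl
      exact this.mpr (by rw [← hx0, Fin.cons_self_tail]; exact x.2)
    have := hc' _ htail
    simp only [LinearMap.mem_ker]
    show -∑ i, c' i * (x : Fin (l + 1) → A) i.succ = 0
    simpa [Fin.tail] using this
  -- factor f through the quotient by ker π
  let fbar : (C ⧸ LinearMap.ker π) →ₗ[A] A := Submodule.liftQ _ f hker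
  let p : (C ⧸ LinearMap.ker π) →ₗ[A] A := Submodule.liftQ _ π le_rfl
  have hp : Function.Injective p := by
    rw [← LinearMap.ker_eq_bot]
    exact Submodule.ker_liftQ_eq_bot _ _ _ le_rfl
  obtain ⟨h, hh⟩ := Module.Injective.out p hp fbar
  refine ⟨h 1, ?_⟩
  intro x hx
  have key := hh (Submodule.Quotient.mk (⟨x, hx⟩ : C))
  have hp1 : p (Submodule.Quotient.mk (⟨x, hx⟩ : C)) = x 0 := rfl
  have hf1 : fbar (Submodule.Quotient.mk (⟨x, hx⟩ : C)) = -∑ i, c' i * x i.succ := rfl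
  rw [hp1, hf1] at key
  have hsmul : h (x 0) = x 0 * h 1 := by
    have : x 0 = x 0 • (1 : A) := by simp
    rw [this, map_smul, smul_eq_mul, smul_eq_mul, mul_one]
  rw [Fin.sum_univ_succ]
  simp only [Fin.cons_zero, Fin.cons_succ]
  rw [hsmul] at key
  linear_combination key
end

section
/- Let A = ℤ_4[X]/⟨X^2+2X⟩ and let C ⊆ A^2 be the A-submodule generated by (X,0), (2,X), (0,2). Then the dual code C^⊥ = {e ∈ A^2 : e_1c_1 + e_2c_2 = 0 for all c ∈ C} is generated as an A-module by the single element (X+2, 2). -/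
/-!
Over `ZMod 4` the ring `A` is free with basis `1, X`, and `X (X + 2) = 0`, `4 = 0`. Computing in
coordinates, the annihilator of `X` is `ZMod 4 · (X + 2)`, and an element killed by both `X` and
`2` is of the form `2tX`. If `e ⊥ C`, then `X e₁ = 0` gives `e₁ = r (X + 2)`; the element
`e₂ - 2r` is then killed by `X` and by `2`, so `e₂ - 2r = 2tX` and `e = (r + tX) (X + 2, 2)`.
-/

open Polynomial

theorem mem_dualCode_span_iff {A : Type*} [CommRing A] {l : ℕ} {S : Set (Fin l → A)}
    {e : Fin l → A} : e ∈ dualCode (Submodule.span A S) ↔ ∀ c ∈ S, ∑ i, e i * c i = 0 := by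
  refine ⟨fun he c hc => he c (Submodule.subset_span hc), fun he c hc => ?_⟩
  induction hc using Submodule.span_induction with
  | mem c hc => exact he c hc
  | zero => simp
  | add u v _ _ hu hv => simp [mul_add, Finset.sum_add_distrib, hu, hv]
  | smul r u _ hu => simp [mul_left_comm, ← Finset.mul_sum, hu]

theorem Polynomial.monic_X_sq_add_two_mul_X {R : Type*} [CommSemiring R] :
    (X ^ 2 + 2 * X : R[X]).Monic := by
  monicity!

theorem Polynomial.natDegree_X_sq_add_two_mul_X {R : Type*} [CommSemiring R] [Nontrivial R] :
    (X ^ 2 + 2 * X : R[X]).natDegree = 2 := by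
  compute_degree!

namespace AdjoinRoot

variable {R : Type*} [CommRing R] {f : R[X]}

theorem exists_eq_of_add_of_mul_root (hf : f.Monic) (hdeg : f.natDegree = 2)
    (y : AdjoinRoot f) : ∃ a b : R, y = of f a + of f b * root f := by
  obtain ⟨p, rfl⟩ := mk_surjective y
  have hp : (p %ₘ f).natDegree ≤ 1 := by
    have := natDegree_modByMonic_lt p hf (by rintro rfl; simp at hdeg)
    omega
  obtain ⟨b, a, hab⟩ := exists_eq_X_add_C_of_natDegree_le_one hp
  refine ⟨a, b, ?_⟩
  rw [← mk_leftInverse hf (mk f p), modByMonicHom_mk, hab]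
  simp [add_comm]

theorem eq_zero_of_of_add_of_mul_root_eq_zero (hf : f.Monic) (hdeg : f.natDegree = 2)
    {a b : R} (h : of f a + of f b * root f = 0) : a = 0 ∧ b = 0 := by
  rw [← mk_C, ← mk_C, ← mk_X, ← map_mul, ← map_add, mk_eq_zero, add_comm] at h
  have hlt : (C b * X + C a).degree < f.degree := by
    rw [(degree_eq_iff_natDegree_eq_of_pos two_pos).mpr hdeg]
    exact degree_linear_le.trans_lt (by decide)
  have h0 : C b * X + C a = 0 := by_contra fun h0 => hf.not_dvd_of_degree_lt h0 hlt h
  have ha := congrArg (coeff · 0) h0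
  have hb := congrArg (coeff · 1) h0
  simp at ha hb
  exact ⟨ha, hb⟩

end AdjoinRoot

abbrev QuadZ4 : Type := AdjoinRoot (X ^ 2 + 2 * X : (ZMod 4)[X])

namespace QuadZ4

open AdjoinRoot

local notation "ξ" => root (X ^ 2 + 2 * X : (ZMod 4)[X])
local notation "κ" => of (X ^ 2 + 2 * X : (ZMod 4)[X])

theorem root_mul_root_add_two : ξ * (ξ + 2) = 0 := by
  have h : mk (X ^ 2 + 2 * X : (ZMod 4)[X]) (X ^ 2 + 2 * X) = 0 := mk_self
  simp only [map_add, map_mul, map_pow, mk_X, map_ofNat] at h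
  linear_combination h

theorem four_eq_zero : (4 : QuadZ4) = 0 := by
  rw [← map_ofNat κ 4, show (4 : ZMod 4) = 0 by decide, map_zero]

theorem natDegree_X_sq_add_two_mul_X : (X ^ 2 + 2 * X : (ZMod 4)[X]).natDegree = 2 :=
  have : Fact (1 < 4) := ⟨by norm_num⟩
  Polynomial.natDegree_X_sq_add_two_mul_X

theorem exists_eq_of_add_of_mul_root (y : QuadZ4) : ∃ a b : ZMod 4, y = κ a + κ b * ξ :=
  AdjoinRoot.exists_eq_of_add_of_mul_root monic_X_sq_add_two_mul_X natDegree_X_sq_add_two_mul_X y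

theorem eq_zero_of_of_add_of_mul_root_eq_zero {a b : ZMod 4} (h : κ a + κ b * ξ = 0) :
    a = 0 ∧ b = 0 :=
  AdjoinRoot.eq_zero_of_of_add_of_mul_root_eq_zero monic_X_sq_add_two_mul_X
    natDegree_X_sq_add_two_mul_X h

theorem exists_eq_of_mul_root_add_two_of_root_mul_eq_zero {y : QuadZ4} (h : ξ * y = 0) :
    ∃ b : ZMod 4, y = κ b * (ξ + 2) := by
  obtain ⟨a, b, rfl⟩ := exists_eq_of_add_of_mul_root y
  have hab : κ 0 + κ (a - 2 * b) * ξ = 0 := by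
    simp only [map_zero, map_sub, map_mul, map_ofNat]
    linear_combination h - κ b * root_mul_root_add_two
  have ha : a = 2 * b := sub_eq_zero.mp (eq_zero_of_of_add_of_mul_root_eq_zero hab).2
  refine ⟨b, ?_⟩
  rw [ha, map_mul, map_ofNat]
  ring

theorem exists_eq_two_mul_mul_root_of_root_mul_eq_zero_of_two_mul_eq_zero {y : QuadZ4}
    (h₁ : ξ * y = 0) (h₂ : 2 * y = 0) : ∃ t : QuadZ4, y = 2 * t * ξ := by
  obtain ⟨b, rfl⟩ := exists_eq_of_mul_root_add_two_of_root_mul_eq_zero h₁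
  have h2b : κ (2 * (2 * b)) + κ (2 * b) * ξ = 0 := by
    simp only [map_mul, map_ofNat]
    linear_combination h₂
  obtain ⟨t, rfl⟩ : ∃ t, b = 2 * t := by
    have half : ∀ b : ZMod 4, 2 * b = 0 → ∃ t, b = 2 * t := by decide
    exact half b (eq_zero_of_of_add_of_mul_root_eq_zero h2b).2
  refine ⟨κ t, ?_⟩
  simp only [map_mul, map_ofNat]
  linear_combination κ t * four_eq_zero

theorem mem_span_root_add_two_two {e : Fin 2 → QuadZ4} (h₁ : e 0 * ξ = 0)
    (h₂ : e 0 * 2 + e 1 * ξ = 0) (h₃ : e 1 * 2 = 0) :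
    e ∈ Submodule.span QuadZ4 {![ξ + 2, 2]} := by
  obtain ⟨b, hb⟩ := exists_eq_of_mul_root_add_two_of_root_mul_eq_zero
    (y := e 0) (by linear_combination h₁)
  obtain ⟨t, ht⟩ := exists_eq_two_mul_mul_root_of_root_mul_eq_zero_of_two_mul_eq_zero
    (y := e 1 - 2 * κ b) (by linear_combination h₂ - 2 * hb - κ b * (ξ + 1) * four_eq_zero)
    (by linear_combination h₃ - κ b * four_eq_zero)
  refine Submodule.mem_span_singleton.mpr ⟨κ b + t * ξ, ?_⟩
  ext i
  fin_cases i
  · simp only [Fin.zero_eta, Pi.smul_apply, Matrix.cons_val_zero, smul_eq_mul]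
    linear_combination -hb + t * root_mul_root_add_two
  · simp only [Fin.mk_one, Pi.smul_apply, Matrix.cons_val_one, Matrix.cons_val_fin_one,
      smul_eq_mul]
    linear_combination -ht

theorem dualCode_span_eq :
    dualCode (Submodule.span QuadZ4 {![ξ, 0], ![2, ξ], ![0, 2]}) =
      Submodule.span QuadZ4 {![ξ + 2, 2]} := by
  apply le_antisymm
  · intro e he
    simp only [mem_dualCode_span_iff, Set.mem_insert_iff, Set.mem_singleton_iff,
      Fin.sum_univ_two, forall_eq_or_imp, forall_eq, Matrix.cons_val_zero, Matrix.cons_val_one,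
      Matrix.cons_val_fin_one, mul_zero, add_zero, zero_add] at he
    exact mem_span_root_add_two_two he.1 he.2.1 he.2.2
  · rw [Submodule.span_singleton_le_iff_mem, mem_dualCode_span_iff]
    simp only [Set.mem_insert_iff, Set.mem_singleton_iff, Fin.sum_univ_two, forall_eq_or_imp,
      forall_eq, Matrix.cons_val_zero, Matrix.cons_val_one, Matrix.cons_val_fin_one, mul_zero,
      add_zero, zero_add]
    exact ⟨by linear_combination root_mul_root_add_two,
      by linear_combination (ξ + 1) * four_eq_zero, by linear_combination four_eq_zero⟩

end QuadZ4

/-- Let `A = ℤ_4[X]/⟨X²+2X⟩` and `C ⊆ A²` the `A`-submodule generated by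
`(X,0), (2,X), (0,2)`. Then `C^⊥` is generated by the single element `(X+2, 2)`. -/
theorem stmt17 (I : Ideal (Polynomial (ZMod 4)))
    (hI : I = Ideal.span {Polynomial.X ^ 2 + 2 * Polynomial.X}) :
    dualCode (Submodule.span (Polynomial (ZMod 4) ⧸ I)
        {![Ideal.Quotient.mk I Polynomial.X, 0],
          ![2, Ideal.Quotient.mk I Polynomial.X],
          ![0, 2]})
      = Submodule.span (Polynomial (ZMod 4) ⧸ I)
          {![Ideal.Quotient.mk I Polynomial.X + 2, 2]} := by
  subst hI
  exact QuadZ4.dualCode_span_eq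
end
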